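/- arXiv:2012.02231 — 3 statements merged into one kernel-verified Lean document; each statement's English description precedes it below -/
import Mathlib

section
/- Let N be a rooted binary phylogenetic network on X, let A ⊆ X, and let G_A be the path graph of N on A (the subgraph consisting of all directed paths from the lowest stable ancestor of A to leaves in A). If u and v are vertices of G_A and every directed path in G_A from u to a fixed leaf ℓ ∈ A traverses v, then every directed path in N from u to ℓ traverses v. -/
open scoped Classical

/-- A directed graph with a finite vertex set and a multiset of arcs
(so that parallel arcs can be represented). -/
structure Digraph' (α : Type*) where
  V : Finset α
  E : Multiset (α × α)

namespace Digraph'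

variable {α : Type*} [DecidableEq α]

/-- In-degree of a vertex. -/
noncomputable def inDeg (G : Digraph' α) (v : α) : ℕ :=
  (G.E.filter (fun e => e.2 = v)).card

/-- Out-degree of a vertex. -/
noncomputable def outDeg (G : Digraph' α) (v : α) : ℕ :=
  (G.E.filter (fun e => e.1 = v)).card

/-- A (directed) path, given as its nonempty list of vertices. -/
def IsPath (G : Digraph' α) (p : List α) : Prop :=
  p ≠ [] ∧ (∀ v ∈ p, v ∈ G.V) ∧ p.Chain' (fun u v => (u, v) ∈ G.E)

/-- A directed path from `u` to `v`. -/
def PathFrom (G : Digraph' α) (u v : α) (p : List α) : Prop :=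
  G.IsPath p ∧ p.head? = some u ∧ p.getLast? = some v

/-- There is a directed path from `u` to `v` (possibly trivial). -/
def Reaches (G : Digraph' α) (u v : α) : Prop := ∃ p, G.PathFrom u v p

/-- Acyclicity: no arc whose head reaches its tail. -/
def Acyclic (G : Digraph' α) : Prop := ∀ e ∈ G.E, ¬ G.Reaches e.2 e.1

/-- `u` is a stable ancestor of `X'` (w.r.t. root `ρ`): every path from
`ρ` to each `x ∈ X'` traverses `u`. -/
def StableAncestor (G : Digraph' α) (ρ : α) (X' : Finset α) (u : α) : Prop :=
  ∀ x ∈ X', ∀ p, G.PathFrom ρ x p → u ∈ p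

/-- `u` is a lowest stable ancestor of `X'`: it is a stable ancestor and
no distinct stable ancestor of `X'` is a descendant of `u`. -/
def IsLowestSA (G : Digraph' α) (ρ : α) (X' : Finset α) (u : α) : Prop :=
  G.StableAncestor ρ X' u ∧
    ∀ v, G.StableAncestor ρ X' v → v ≠ u → ¬ G.Reaches u v

/-- Delete a vertex together with all incident arcs. -/
noncomputable def deleteVertex (G : Digraph' α) (w : α) : Digraph' α :=
  ⟨G.V.erase w, G.E.filter (fun e => e.1 ≠ w ∧ e.2 ≠ w)⟩

/-- `G'` is obtained from `G` by suppressing the in-degree-one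
out-degree-one vertex `w` (replacing `(p,w)`, `(w,c)` by the arc `(p,c)`). -/
def Suppress (G : Digraph' α) (w : α) (G' : Digraph' α) : Prop :=
  G.inDeg w = 1 ∧ G.outDeg w = 1 ∧
  ∃ p c, (p, w) ∈ G.E ∧ (w, c) ∈ G.E ∧
    G'.V = G.V.erase w ∧ G'.E = (G.deleteVertex w).E + {(p, c)}

/-- `G'` is obtained from `G` by deleting exactly one arc of a pair of
parallel arcs. -/
def DeleteParallel (G G' : Digraph' α) : Prop :=
  ∃ e : α × α, 2 ≤ G.E.count e ∧ G'.V = G.V ∧ G'.E = G.E.erase e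

/-- One simplification step: suppress a degree-(1,1) vertex or delete a
parallel arc. -/
def SimpStep (G G' : Digraph' α) : Prop :=
  (∃ w, G.Suppress w G') ∨ G.DeleteParallel G'

/-- `G'` is the full simplification of `G`. -/
def FullSimp (G G' : Digraph' α) : Prop :=
  Relation.ReflTransGen (SimpStep (α := α)) G G' ∧ ∀ G'', ¬ SimpStep G' G''

/-- The path graph of `G` on `A` (w.r.t. the vertex `r`): all vertices and
arcs lying on a directed path from `r` to a leaf in `A`. -/
noncomputable def pathGraph (G : Digraph' α) (r : α) (A : Finset α) : Digraph' α :=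
  ⟨G.V.filter (fun v => ∃ x ∈ A, ∃ p, G.PathFrom r x p ∧ v ∈ p),
   G.E.filter (fun e => ∃ x ∈ A, ∃ p, G.PathFrom r x p ∧ e ∈ p.zip p.tail)⟩

/-- Isomorphism of digraphs fixing every element of `A`. -/
def IsoOn (G1 G2 : Digraph' α) (A : Finset α) : Prop :=
  ∃ φ : α → α, Set.BijOn φ ↑G1.V ↑G2.V ∧ (∀ x ∈ A, φ x = x) ∧
    G2.E = G1.E.map (fun e => (φ e.1, φ e.2))

end Digraph'

/-- A rooted binary phylogenetic network on the leaf set `X`. -/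
structure PhyloNet (α : Type*) where
  G : Digraph' α
  root : α
  X : Finset α
  root_mem : root ∈ G.V
  wf : ∀ e ∈ G.E, e.1 ∈ G.V ∧ e.2 ∈ G.V
  noParallel : ∀ e : α × α, G.E.count e ≤ 1
  acyclic : G.Acyclic
  reach : ∀ v ∈ G.V, G.Reaches root v
  binary :
    (G.V = {root} ∧ G.E = 0 ∧ X = {root}) ∨
    (G.inDeg root = 0 ∧ G.outDeg root = 2 ∧
     (∀ x ∈ X, x ∈ G.V ∧ G.inDeg x = 1 ∧ G.outDeg x = 0) ∧
     (∀ v ∈ G.V, G.outDeg v = 0 → v ∈ X) ∧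
     (∀ v ∈ G.V, v ≠ root → v ∉ X →
       (G.inDeg v = 1 ∧ G.outDeg v = 2) ∨ (G.inDeg v = 2 ∧ G.outDeg v = 1)))

namespace PhyloNet

variable {α : Type*} [DecidableEq α]

/-- `N` is recoverable: the root is the only stable ancestor of `X`. -/
def Recoverable (N : PhyloNet α) : Prop :=
  ∀ v, N.G.StableAncestor N.root N.X v → v = N.root

/-- `{a, b}` is a cherry: two distinct leaves with a common parent. -/
def Cherry (N : PhyloNet α) (a b : α) : Prop :=
  a ∈ N.X ∧ b ∈ N.X ∧ a ≠ b ∧ ∃ p, (p, a) ∈ N.G.E ∧ (p, b) ∈ N.G.E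

/-- `(a, b)` is a reticulated cherry: leaves `a, b` whose parents `p_a, p_b`
satisfy that `(p_a, p_b)` is an arc and `p_b` is a reticulation. -/
def RetCherry (N : PhyloNet α) (a b : α) : Prop :=
  a ∈ N.X ∧ b ∈ N.X ∧ a ≠ b ∧
  ∃ pa pb, (pa, a) ∈ N.G.E ∧ (pb, b) ∈ N.G.E ∧ (pa, pb) ∈ N.G.E ∧
    N.G.inDeg pb = 2

/-- `N'` is obtained from `N` by reducing the leaf `b` of the cherry `{a, b}`:
delete `b` and its incident arc and suppress the resulting degree-two
vertex (or, if the common parent is the root, replace `N` by the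
single-vertex network on `a`). -/
def ReduceCherry (N : PhyloNet α) (a b : α) (N' : PhyloNet α) : Prop :=
  N.Cherry a b ∧ N'.X = N.X.erase b ∧
  ∃ p, (p, a) ∈ N.G.E ∧ (p, b) ∈ N.G.E ∧
    ((p = N.root ∧ N'.G.V = {a} ∧ N'.G.E = 0 ∧ N'.root = a) ∨
     (p ≠ N.root ∧ N'.root = N.root ∧ (N.G.deleteVertex b).Suppress p N'.G))

/-- `N'` is obtained from `N` by cutting the reticulated cherry `(a, b)`:
delete the reticulation arc `(p_a, p_b)` and suppress the two resulting
degree-two vertices. -/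
def CutRetCherry (N : PhyloNet α) (a b : α) (N' : PhyloNet α) : Prop :=
  a ∈ N.X ∧ b ∈ N.X ∧ a ≠ b ∧ N'.X = N.X ∧ N'.root = N.root ∧
  ∃ pa pb, (pa, a) ∈ N.G.E ∧ (pb, b) ∈ N.G.E ∧ (pa, pb) ∈ N.G.E ∧
    N.G.inDeg pb = 2 ∧
    ∃ G1 : Digraph' α, G1.V = N.G.V ∧ G1.E = N.G.E.erase (pa, pb) ∧
      ∃ G2 : Digraph' α, G1.Suppress pa G2 ∧ G2.Suppress pb N'.G

/-- One cherry-picking step: reduce a leaf of a cherry or cut a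
reticulated cherry. -/
def PickStep (N N' : PhyloNet α) : Prop :=
  (∃ a b, N.ReduceCherry a b N') ∨ (∃ a b, N.CutRetCherry a b N')

/-- `N` is an orchard network: some sequence of cherry-picking operations
reduces it to a single vertex. -/
def IsOrchard (N : PhyloNet α) : Prop :=
  ∃ M : PhyloNet α, Relation.ReflTransGen (PickStep (α := α)) N M ∧ M.G.V.card = 1

/-- `H` is the network exhibited by `N` on `A`: the full simplification of
the path graph of `N` on `A`, rooted at the lowest stable ancestor of `A`. -/
def Exhibits (N : PhyloNet α) (A : Finset α) (H : Digraph' α) : Prop :=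
  ∃ r, N.G.IsLowestSA N.root A r ∧ Digraph'.FullSimp (N.G.pathGraph r A) H

end PhyloNet

/-! Since `u` lies on some path from `r` to a leaf of `A`, prefixing any path from `u` to `ℓ`
with the part of that path before `u` gives a path from `r` to `ℓ ∈ A`. Hence every vertex and
arc of a path from `u` to `ℓ` in `N` already lies in the path graph. -/

theorem List.isChain_iff_forall_mem_zip_tail {α : Type*} {R : α → α → Prop} {l : List α} :
    l.IsChain R ↔ ∀ e ∈ l.zip l.tail, R e.1 e.2 := by
  induction l using List.twoStepInduction <;> simp_all

theorem List.mem_zip_tail_append {α : Type*} {l₁ l₂ : List α} {e : α × α}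
    (he : e ∈ l₂.zip l₂.tail) : e ∈ (l₁ ++ l₂).zip (l₁ ++ l₂).tail := by
  induction l₁ with
  | nil => exact he
  | cons a l₁ ih =>
    cases l₁ with
    | nil => cases l₂ <;> simp_all
    | cons b l₁ => simp_all

namespace Digraph'

variable {α : Type*} {G : Digraph' α} {r x u ℓ : α} {A : Finset α}

theorem PathFrom.splice {s t p : List α} (hq : G.PathFrom r x (s ++ u :: t))
    (hp : G.PathFrom u ℓ p) : G.PathFrom r ℓ (s ++ p) := by
  obtain ⟨⟨-, hqV, hqE⟩, hqr, -⟩ := hq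
  obtain ⟨⟨hp0, hpV, hpE⟩, hpu, hpℓ⟩ := hp
  have hs := List.isChain_append.1 hqE
  refine ⟨⟨by simp [hp0], ?_, hs.1.append hpE ?_⟩, ?_, ?_⟩
  · intro w hw
    rcases List.mem_append.1 hw with hw | hw
    exacts [hqV w (List.mem_append_left _ hw), hpV w hw]
  · simpa [hpu] using hs.2.2
  · simpa [List.head?_append, hpu] using hqr
  · simp [List.getLast?_append, hpℓ]

theorem PathFrom.mem_pathGraph_V {q : List α} {w : α} (hq : G.PathFrom r x q) (hx : x ∈ A)
    (hw : w ∈ q) : w ∈ (G.pathGraph r A).V :=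
  Finset.mem_filter.2 ⟨hq.1.2.1 w hw, x, hx, q, hq, hw⟩

theorem PathFrom.mem_pathGraph_E {q : List α} {e : α × α} (hq : G.PathFrom r x q) (hx : x ∈ A)
    (he : e ∈ q.zip q.tail) : e ∈ (G.pathGraph r A).E :=
  Multiset.mem_filter.2 ⟨List.isChain_iff_forall_mem_zip_tail.1 hq.1.2.2 e he, x, hx, q, hq, he⟩

theorem PathFrom.isPath_pathGraph_of_append {s p : List α} (hq : G.PathFrom r x (s ++ p))
    (hx : x ∈ A) (hp : p ≠ []) : (G.pathGraph r A).IsPath p :=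
  ⟨hp, fun _ hw => hq.mem_pathGraph_V hx (List.mem_append_right s hw),
    List.isChain_iff_forall_mem_zip_tail.2 fun _ he =>
      hq.mem_pathGraph_E hx (List.mem_zip_tail_append he)⟩

theorem PathFrom.pathGraph {p : List α} (hu : u ∈ (G.pathGraph r A).V) (hℓ : ℓ ∈ A)
    (hp : G.PathFrom u ℓ p) : (G.pathGraph r A).PathFrom u ℓ p := by
  obtain ⟨-, x, -, q, hq, huq⟩ := Finset.mem_filter.1 hu
  obtain ⟨s, t, rfl⟩ := List.append_of_mem huq
  exact ⟨(hq.splice hp).isPath_pathGraph_of_append hℓ hp.1.1, hp.2⟩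

end Digraph'

theorem traverses_in_net_of_traverses_in_pathGraph_general
    {α : Type*} (N : PhyloNet α) (A : Finset α) (r : α) (u v ℓ : α) (hl : ℓ ∈ A)
    (hu : u ∈ (N.G.pathGraph r A).V)
    (h : ∀ p, (N.G.pathGraph r A).PathFrom u ℓ p → v ∈ p) :
    ∀ p, N.G.PathFrom u ℓ p → v ∈ p :=
  fun p hp => h p (hp.pathGraph hu hl)

/-- if every path from `u` to the leaf `ℓ ∈ A` in the path
graph of `N` on `A` traverses `v`, then every path from `u` to `ℓ` in `N`
traverses `v`. -/
theorem traverses_in_net_of_traverses_in_pathGraph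
    {α : Type*} [DecidableEq α] (N : PhyloNet α) (A : Finset α)
    (hA : A ⊆ N.X) (r : α) (hr : N.G.IsLowestSA N.root A r)
    (u v ℓ : α) (hl : ℓ ∈ A)
    (hu : u ∈ (N.G.pathGraph r A).V) (hv : v ∈ (N.G.pathGraph r A).V)
    (h : ∀ p, (N.G.pathGraph r A).PathFrom u ℓ p → v ∈ p) :
    ∀ p, N.G.PathFrom u ℓ p → v ∈ p :=
  traverses_in_net_of_traverses_in_pathGraph_general N A r u v ℓ hl hu h
end

section
/- Let N be a rooted binary phylogenetic network on X, let A ⊆ X, and let v be a tree vertex of N that is a descendant of the lowest stable ancestor of A. If A contains every leaf of N that is a descendant of v, then every descendant vertex of v in N is a vertex of the exhibited network N_A. -/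
open scoped Classical

/-!
Follow the full simplification of the path graph one step at a time. Because `A` contains every
leaf below `v`, every vertex `u` below `v` lies on a path from `lsa(A)` to `A`, and so do all its
out-arcs; if `u` is a reticulation, then (as every root-to-`A` path passes through `lsa(A)`, and `v`
is not a reticulation) so do its two in-arcs, one of which comes from below `v`. This picture
(`AgreesBelow`) survives every simplification step: a vertex below `v` of out-degree one is a
reticulation, so it keeps two in-arcs and is never suppressed, and arcs leaving such vertices or
entering such reticulations are never parallel. In particular no vertex below `v` is ever deleted.
-/

namespace Digraph'

variable {α : Type*} {G : Digraph' α} {ρ r u v w x y a b : α} {A : Finset α} {p q : List α}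

lemma pathFrom_singleton (hu : u ∈ G.V) : G.PathFrom u u [u] :=
  ⟨⟨List.cons_ne_nil _ _, by simpa using hu, List.isChain_singleton _⟩, rfl, rfl⟩

lemma reaches_refl (hu : u ∈ G.V) : G.Reaches u u := ⟨[u], pathFrom_singleton hu⟩

lemma PathFrom.exists_eq_cons (h : G.PathFrom u x p) : ∃ t, p = u :: t := by
  obtain ⟨⟨hne, -, -⟩, hhead, -⟩ := h
  obtain ⟨a, t, rfl⟩ := List.exists_cons_of_ne_nil hne
  exact ⟨t, by simpa using hhead⟩

lemma PathFrom.of_cons_cons (h : G.PathFrom u x (u :: w :: p)) :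
    (u, w) ∈ G.E ∧ G.PathFrom w x (w :: p) := by
  obtain ⟨⟨-, hV, hchain⟩, -, hlast⟩ := h
  obtain ⟨huw, hchain⟩ := List.isChain_cons_cons.1 hchain
  refine ⟨huw, ⟨⟨List.cons_ne_nil _ _, fun z hz => hV z (.tail _ hz), hchain⟩, rfl, ?_⟩⟩
  rwa [List.getLast?_cons_cons] at hlast

lemma PathFrom.last_mem (h : G.PathFrom u x p) : x ∈ p :=
  List.mem_of_mem_getLast? h.2.2

lemma Reaches.right_mem (h : G.Reaches u x) : x ∈ G.V :=
  let ⟨_, hp⟩ := h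
  hp.1.2.1 x hp.last_mem

lemma PathFrom.append (hp : G.PathFrom u v p) (hvw : (v, w) ∈ G.E) (hq : G.PathFrom w x q) :
    G.PathFrom u x (p ++ q) := by
  obtain ⟨⟨hpne, hpV, hpC⟩, hph, hpl⟩ := hp
  obtain ⟨⟨hqne, hqV, hqC⟩, hqh, hql⟩ := hq
  refine ⟨⟨by simp [hpne], ?_, hpC.append hqC ?_⟩, ?_, ?_⟩
  · simpa only [List.mem_append] using fun z => Or.rec (hpV z) (hqV z)
  · simp_all
  · rwa [List.head?_append_of_ne_nil _ hpne]
  · rwa [List.getLast?_append_of_ne_nil _ hqne]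

lemma reaches_of_mem_E (hab : (a, b) ∈ G.E) (ha : a ∈ G.V) (hb : b ∈ G.V) : G.Reaches a b :=
  ⟨_, (pathFrom_singleton ha).append hab (pathFrom_singleton hb)⟩

lemma PathFrom.trans (hp : G.PathFrom u v p) (hq : G.PathFrom v x q) :
    G.PathFrom u x (p ++ q.tail) := by
  obtain ⟨t, rfl⟩ := hq.exists_eq_cons
  cases t with
  | nil => simpa [show v = x by simpa using hq.2.2] using hp
  | cons w t =>
    obtain ⟨hvw, hwx⟩ := hq.of_cons_cons
    exact hp.append hvw hwx

lemma Reaches.trans (huv : G.Reaches u v) (hvx : G.Reaches v x) : G.Reaches u x :=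
  let ⟨_, hp⟩ := huv
  let ⟨_, hq⟩ := hvx
  ⟨_, hp.trans hq⟩

lemma PathFrom.reaches_of_mem (h : G.PathFrom u x p) (ha : a ∈ p) :
    G.Reaches u a ∧ G.Reaches a x := by
  obtain ⟨⟨-, hV, hchain⟩, hhead, hlast⟩ := h
  obtain ⟨s, t, rfl⟩ := List.append_of_mem ha
  refine ⟨⟨s ++ [a], ⟨⟨by simp, ?_, hchain.prefix ⟨t, by simp⟩⟩, ?_, by simp⟩⟩,
    ⟨a :: t, ⟨⟨by simp, ?_, hchain.suffix ⟨s, rfl⟩⟩, rfl, ?_⟩⟩⟩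
  · exact fun z hz => hV z (by simp only [List.mem_append, List.mem_cons] at hz ⊢; tauto)
  · cases s <;> simp_all
  · exact fun z hz => hV z (by simp_all)
  · rwa [List.getLast?_append_cons] at hlast

lemma Acyclic.eq_of_reaches (hG : G.Acyclic) (hab : G.Reaches a b) (hba : G.Reaches b a) :
    a = b := by
  obtain ⟨p, hp⟩ := hab
  obtain ⟨t, rfl⟩ := hp.exists_eq_cons
  cases t with
  | nil => simpa using hp.2.2
  | cons c t =>
    obtain ⟨hac, hcb⟩ := hp.of_cons_cons
    exact absurd (Reaches.trans ⟨_, hcb⟩ hba) (hG _ hac)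

lemma Reaches.exists_mem_E_of_ne (h : G.Reaches u x) (hne : u ≠ x) :
    ∃ a, G.Reaches u a ∧ (a, x) ∈ G.E := by
  obtain ⟨p, hp⟩ := h
  induction p generalizing u with
  | nil => exact absurd rfl hp.1.1
  | cons b t ih =>
    obtain rfl : b = u := by simpa using hp.2.1
    cases t with
    | nil => exact absurd (by simpa using hp.2.2) hne
    | cons w t =>
      obtain ⟨hbw, hwx⟩ := hp.of_cons_cons
      have hb : b ∈ G.V := hp.1.2.1 b (.head _)
      have hbw' : G.Reaches b w := reaches_of_mem_E hbw hb (hwx.1.2.1 w (.head _))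
      by_cases hw : w = x
      · exact ⟨b, reaches_refl hb, hw ▸ hbw⟩
      · obtain ⟨a, hwa, hax⟩ := ih hw hwx
        exact ⟨a, hbw'.trans hwa, hax⟩


lemma mem_zip_tail_append (s t : List α) :
    (a, b) ∈ (s ++ a :: b :: t).zip (s ++ a :: b :: t).tail := by
  induction s with
  | nil => simp
  | cons c s ih => cases s <;> simp_all

lemma mem_pathGraph_V (hru : G.Reaches r u) (hux : G.Reaches u x) (hx : x ∈ A) :
    u ∈ (G.pathGraph r A).V := by
  obtain ⟨p, hp⟩ := hru
  obtain ⟨q, hq⟩ := hux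
  exact Finset.mem_filter.2 ⟨hp.1.2.1 u hp.last_mem, x, hx, _, hp.trans hq,
    List.mem_append_left _ hp.last_mem⟩

lemma mem_pathGraph_E (hra : G.Reaches r a) (hab : (a, b) ∈ G.E) (hbx : G.Reaches b x)
    (hx : x ∈ A) : (a, b) ∈ (G.pathGraph r A).E := by
  obtain ⟨p, hp⟩ := hra
  obtain ⟨q, hq⟩ := hbx
  obtain ⟨t, rfl⟩ := hq.exists_eq_cons
  refine Multiset.mem_filter.2 ⟨hab, x, hx, _, hp.append hab hq, ?_⟩
  rw [← List.dropLast_append_getLast? a hp.2.2]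
  simpa using mem_zip_tail_append p.dropLast t

lemma pathGraph_E_filter {P : α × α → Prop} [DecidablePred P]
    (h : ∀ e ∈ G.E, P e → e ∈ (G.pathGraph r A).E) :
    (G.pathGraph r A).E.filter P = G.E.filter P := by
  refine (Multiset.filter_filter _ _ _).trans (Multiset.filter_congr fun e he => ?_)
  exact ⟨And.left, fun hP => ⟨hP, (Multiset.mem_filter.1 (h e he hP)).2⟩⟩

lemma StableAncestor.reaches_or_reaches (hr : G.StableAncestor ρ A r) (hy : G.Reaches ρ y)
    (hyu : (y, u) ∈ G.E) (hux : G.Reaches u x) (hx : x ∈ A) :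
    G.Reaches r y ∨ G.Reaches u r := by
  obtain ⟨p, hp⟩ := hy
  obtain ⟨p', hp'⟩ := hux
  rcases List.mem_append.1 (hr x hx _ (hp.append hyu hp')) with h | h
  · exact .inl (hp.reaches_of_mem h).2
  · exact .inr (hp'.reaches_of_mem h).1

variable [DecidableEq α]

lemma eq_of_outDeg_eq_one (h : G.outDeg u = 1) (ha : (u, a) ∈ G.E) (hb : (u, b) ∈ G.E) :
    a = b := by
  obtain ⟨e, he⟩ := Multiset.card_eq_one.1 h
  have hae : (u, a) = e := by simpa [he] using Multiset.mem_filter_of_mem ha (p := (·.1 = u)) rfl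
  have hbe : (u, b) = e := by simpa [he] using Multiset.mem_filter_of_mem hb (p := (·.1 = u)) rfl
  exact (Prod.ext_iff.1 (hae.trans hbe.symm)).2

lemma exists_inArcs_eq_pair (hnd : G.E.Nodup) (h2 : G.inDeg u = 2) (ha : (a, u) ∈ G.E) :
    ∃ b, a ≠ b ∧ G.E.filter (fun e => e.2 = u) = {(a, u), (b, u)} := by
  suffices key : ∀ e₁ e₂, G.E.filter (fun e => e.2 = u) = {e₁, e₂} → (a, u) = e₁ →
      ∃ b, a ≠ b ∧ G.E.filter (fun e => e.2 = u) = {(a, u), (b, u)} by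
    obtain ⟨e₁, e₂, h⟩ := Multiset.card_eq_two.1 h2
    have hmem : (a, u) ∈ G.E.filter (fun e => e.2 = u) := Multiset.mem_filter.2 ⟨ha, rfl⟩
    rw [h] at hmem
    rcases Multiset.mem_cons.1 hmem with h₁ | h₂
    · exact key e₁ e₂ h h₁
    · exact key e₂ e₁ (h.trans (Multiset.pair_comm _ _)) (Multiset.mem_singleton.1 h₂)
  rintro e₁ ⟨b, c⟩ h rfl
  have hpair_nodup := h ▸ hnd.filter _
  have hmem : (b, c) ∈ G.E.filter (fun e => e.2 = u) := by simp [h]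
  obtain rfl : c = u := (Multiset.mem_filter.1 hmem).2
  refine ⟨b, fun hab => ?_, h⟩
  subst hab
  simp [Multiset.insert_eq_cons] at hpair_nodup

end Digraph'

lemma Multiset.filter_erase_of_two_le_count {β : Type*} [DecidableEq β] {s : Multiset β} {e : β}
    {P : β → Prop} [DecidablePred P] (hnd : (s.filter P).Nodup) (he : 2 ≤ s.count e) :
    (s.erase e).filter P = s.filter P := by
  have hPe : ¬ P e := fun hPe => by
    have := Multiset.nodup_iff_count_le_one.1 hnd e
    rw [Multiset.count_filter_of_pos hPe] at this
    omega
  rw [← Multiset.sub_singleton, Multiset.filter_sub, Multiset.filter_singleton, if_neg hPe]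
  exact tsub_zero _

namespace PhyloNet

open Digraph'

variable {α : Type*} (N : PhyloNet α) {u a b : α}

lemma reaches_of_mem_E (h : (a, b) ∈ N.G.E) : N.G.Reaches a b :=
  Digraph'.reaches_of_mem_E h (N.wf _ h).1 (N.wf _ h).2

variable [DecidableEq α]

lemma nodup_E : N.G.E.Nodup :=
  Multiset.nodup_iff_count_le_one.2 fun e => by convert N.noParallel e

lemma mem_X_of_outDeg_eq_zero (hu : u ∈ N.G.V) (h : N.G.outDeg u = 0) : u ∈ N.X := by
  rcases N.binary with ⟨hV, -, hX⟩ | ⟨-, -, -, hleaf, -⟩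
  · rwa [hX, ← hV]
  · exact hleaf u hu (by convert h)

lemma inDeg_eq_two_of_outDeg_eq_one (hu : u ∈ N.G.V) (h : N.G.outDeg u = 1) :
    N.G.inDeg u = 2 := by
  rcases N.binary with ⟨-, hE, -⟩ | ⟨-, hroot, hX, -, hclass⟩
  · simp [outDeg, hE] at h
  · have hu_root : u ≠ N.root := by
      rintro rfl
      have : N.G.outDeg N.root = 2 := by convert hroot
      omega
    have hu_X : u ∉ N.X := fun huX => by
      have : N.G.outDeg u = 0 := by convert (hX u huX).2.2
      omega
    rcases hclass u hu hu_root hu_X with ⟨-, h2⟩ | ⟨h2, -⟩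
    · have : N.G.outDeg u = 2 := by convert h2
      omega
    · convert h2

lemma exists_mem_X_reaches (hu : u ∈ N.G.V) : ∃ x ∈ N.X, N.G.Reaches u x := by
  set desc : α → Finset α := fun z => N.G.V.filter (N.G.Reaches z)
  obtain ⟨z, hz, hmin⟩ := (desc u).exists_min_image (fun z => (desc z).card)
    ⟨u, Finset.mem_filter.2 ⟨hu, reaches_refl hu⟩⟩
  obtain ⟨hzV, huz⟩ := Finset.mem_filter.1 hz
  refine ⟨z, N.mem_X_of_outDeg_eq_zero hzV ?_, huz⟩
  by_contra hout
  obtain ⟨⟨z', c⟩, he⟩ := Multiset.card_pos_iff_exists_mem.1 (Nat.pos_of_ne_zero hout)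
  obtain ⟨hzc, hz' : z' = z⟩ := Multiset.mem_filter.1 he
  rw [hz'] at hzc
  have hzc' := N.reaches_of_mem_E hzc
  have hlt : (desc c).card < (desc z).card := by
    refine Finset.card_lt_card (Finset.ssubset_iff_subset_ne.2 ⟨fun y hy => ?_, fun heq => ?_⟩)
    · obtain ⟨hyV, hcy⟩ := Finset.mem_filter.1 hy
      exact Finset.mem_filter.2 ⟨hyV, hzc'.trans hcy⟩
    · have hz : z ∈ desc c := heq ▸ Finset.mem_filter.2 ⟨hzV, reaches_refl hzV⟩
      exact N.acyclic _ hzc (Finset.mem_filter.1 hz).2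
  exact (hmin c (Finset.mem_filter.2 ⟨hzc'.right_mem, huz.trans hzc'⟩)).not_gt hlt

structure AgreesBelow (v : α) (G : Digraph' α) : Prop where
  mem_V : ∀ u, N.G.Reaches v u → u ∈ G.V
  outArcs_eq : ∀ u, N.G.Reaches v u → G.E.filter (·.1 = u) = N.G.E.filter (·.1 = u)
  inArcs_eq_pair : ∀ u, N.G.Reaches v u → N.G.inDeg u = 2 →
    ∃ a b, a ≠ b ∧ N.G.Reaches v a ∧ G.E.filter (·.2 = u) = {(a, u), (b, u)}

variable {N} {v w s : α} {G G' : Digraph' α}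

namespace AgreesBelow

lemma reaches_of_mem_E (hG : N.AgreesBelow v G) (hu : N.G.Reaches v u) (h : (u, w) ∈ G.E) :
    N.G.Reaches v w := by
  have h' : (u, w) ∈ G.E.filter (·.1 = u) := Multiset.mem_filter_of_mem h rfl
  rw [hG.outArcs_eq u hu] at h'
  exact hu.trans (N.reaches_of_mem_E (Multiset.mem_of_mem_filter h'))

lemma not_suppressible (hG : N.AgreesBelow v G) (hu : N.G.Reaches v u) :
    ¬ (G.inDeg u = 1 ∧ G.outDeg u = 1) := by
  rintro ⟨hin, hout⟩
  have hout' : N.G.outDeg u = 1 := by rw [outDeg, ← hG.outArcs_eq u hu]; exact hout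
  obtain ⟨a, b, hab, -, hpair⟩ :=
    hG.inArcs_eq_pair u hu (N.inDeg_eq_two_of_outDeg_eq_one hu.right_mem hout')
  rw [inDeg, hpair] at hin
  simp at hin

lemma deleteParallel (hG : N.AgreesBelow v G) (h : G.DeleteParallel G') :
    N.AgreesBelow v G' := by
  obtain ⟨e, he, hV, hE⟩ := h
  refine ⟨fun u hu => hV ▸ hG.mem_V u hu, fun u hu => ?_, fun u hu h2 => ?_⟩
  · have hnd : (G.E.filter (·.1 = u)).Nodup := hG.outArcs_eq u hu ▸ N.nodup_E.filter _
    rw [hE, Multiset.filter_erase_of_two_le_count hnd he, hG.outArcs_eq u hu]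
  · obtain ⟨a, b, hab, ha, hpair⟩ := hG.inArcs_eq_pair u hu h2
    have hnd : (G.E.filter (·.2 = u)).Nodup := by
      simpa [hpair, Multiset.insert_eq_cons] using hab
    exact ⟨a, b, hab, ha, by rw [hE, Multiset.filter_erase_of_two_le_count hnd he, hpair]⟩

lemma suppress (hG : N.AgreesBelow v G) (hs : G.Suppress s G') : N.AgreesBelow v G' := by
  obtain ⟨hin, hout, p, c, hps, hsc, hV, hE⟩ := hs
  have hsD : ¬ N.G.Reaches v s := fun h => hG.not_suppressible h ⟨hin, hout⟩
  have hpD : ¬ N.G.Reaches v p := fun h => hsD (hG.reaches_of_mem_E h hps)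
  have hfilter : ∀ (P : α × α → Prop) [DecidablePred P], G'.E.filter P =
      (G.E.filter P).filter (fun e => e.1 ≠ s ∧ e.2 ≠ s) +
        ({(p, c)} : Multiset _).filter P := by
    intro P _
    rw [hE, Multiset.filter_add, deleteVertex, Multiset.filter_filter, Multiset.filter_filter]
    simp only [and_comm]
  refine ⟨fun u hu => ?_, fun u hu => ?_, fun u hu h2 => ?_⟩
  · rw [hV]
    exact Finset.mem_erase.2 ⟨fun h => hsD (h ▸ hu), hG.mem_V u hu⟩
  · rw [hfilter, Multiset.filter_singleton, if_neg fun (h : p = u) => hpD (h ▸ hu),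
      Multiset.empty_eq_zero, add_zero, Multiset.filter_eq_self.2, hG.outArcs_eq u hu]
    rintro ⟨u', w⟩ he
    obtain ⟨heG, rfl : u' = u⟩ := Multiset.mem_filter.1 he
    exact ⟨fun h => hsD (h ▸ hu), fun h => hsD (h ▸ hG.reaches_of_mem_E hu heG)⟩
  · obtain ⟨a, b, hab, ha, hpair⟩ := hG.inArcs_eq_pair u hu h2
    have has : a ≠ s := fun h => hsD (h ▸ ha)
    have hus : u ≠ s := fun h => hsD (h ▸ hu)
    have hbu : (b, u) ∈ G.E.filter (·.2 = u) := by simp [hpair]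
    rw [hfilter, hpair]
    by_cases hcu : c = u
    · subst hcu
      have hbs : b = s := by
        have hsc' : (s, c) ∈ G.E.filter (·.2 = c) := Multiset.mem_filter_of_mem hsc rfl
        rw [hpair] at hsc'
        rcases Multiset.mem_cons.1 hsc' with h | h
        · exact absurd (Prod.ext_iff.1 h).1.symm has
        · exact ((Prod.ext_iff.1 (Multiset.mem_singleton.1 h)).1).symm
      subst hbs
      exact ⟨a, p, fun h => hpD (h ▸ ha), ha, by simp [Multiset.filter_singleton, has, hus]⟩
    · have hbs : b ≠ s := fun h =>
        hcu (G.eq_of_outDeg_eq_one hout hsc (h ▸ Multiset.mem_of_mem_filter hbu))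
      exact ⟨a, b, hab, ha, by simp [Multiset.filter_singleton, has, hbs, hus, hcu]⟩

lemma of_reflTransGen (hG : N.AgreesBelow v G) (h : Relation.ReflTransGen SimpStep G G') :
    N.AgreesBelow v G' := by
  induction h with
  | refl => exact hG
  | tail _ hstep ih =>
    rcases hstep with ⟨_, hs⟩ | hs
    · exact ih.suppress hs
    · exact ih.deleteParallel hs

end AgreesBelow

lemma agreesBelow_pathGraph {A : Finset α} {r : α} (hv : N.G.inDeg v = 1)
    (hr : N.G.StableAncestor N.root A r) (hrv : N.G.Reaches r v)
    (hleaves : ∀ x ∈ N.X, N.G.Reaches v x → x ∈ A) :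
    N.AgreesBelow v (N.G.pathGraph r A) := by
  have hA : ∀ u, N.G.Reaches v u → ∃ x ∈ A, N.G.Reaches u x := fun u hu =>
    let ⟨x, hx, hux⟩ := N.exists_mem_X_reaches hu.right_mem
    ⟨x, hleaves x hx (hu.trans hux), hux⟩
  have harc : ∀ a b, N.G.Reaches r a → (a, b) ∈ N.G.E → N.G.Reaches v b →
      (a, b) ∈ (N.G.pathGraph r A).E := fun a b hra hab hb =>
    let ⟨_, hx, hbx⟩ := hA b hb
    mem_pathGraph_E hra hab hbx hx
  refine ⟨fun u hu => ?_, fun u hu => ?_, fun u hu h2 => ?_⟩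
  · obtain ⟨x, hx, hux⟩ := hA u hu
    exact mem_pathGraph_V (hrv.trans hu) hux hx
  · refine pathGraph_E_filter ?_
    rintro ⟨_, c⟩ he rfl
    exact harc _ _ (hrv.trans hu) he (hu.trans (N.reaches_of_mem_E he))
  · have hvu : v ≠ u := by rintro rfl; omega
    obtain ⟨a, ha, hau⟩ := hu.exists_mem_E_of_ne hvu
    obtain ⟨b, hab, hpair⟩ := exists_inArcs_eq_pair N.nodup_E h2 hau
    refine ⟨a, b, hab, ha, (pathGraph_E_filter ?_).trans hpair⟩
    rintro ⟨q, _⟩ he rfl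
    refine harc _ _ ?_ he hu
    obtain ⟨x, hx, hux⟩ := hA _ hu
    refine (hr.reaches_or_reaches (N.reach q (N.wf _ he).1) he hux hx).resolve_right fun hur => ?_
    exact hvu (N.acyclic.eq_of_reaches hu (hur.trans hrv))

end PhyloNet

theorem descendants_mem_exhibited_general
    {α : Type*} [DecidableEq α] (N : PhyloNet α) (A : Finset α)
    (v r : α)
    (htree : N.G.inDeg v = 1 ∧ N.G.outDeg v = 2)
    (hr : N.G.IsLowestSA N.root A r) (hdesc : N.G.Reaches r v)
    (hleaves : ∀ x ∈ N.X, N.G.Reaches v x → x ∈ A)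
    (H : Digraph' α) (hH : Digraph'.FullSimp (N.G.pathGraph r A) H)
    (w : α) (hw : N.G.Reaches v w) :
    w ∈ H.V :=
  ((PhyloNet.agreesBelow_pathGraph htree.1 hr.1 hdesc hleaves).of_reflTransGen hH.1).mem_V w hw

/-- if a tree vertex `v` is a descendant of `lsa(A)` and `A`
contains every leaf descendant of `v`, then every descendant of `v` is a
vertex of the exhibited network `N_A`. -/
theorem descendants_mem_exhibited
    {α : Type*} [DecidableEq α] (N : PhyloNet α) (A : Finset α)
    (hA : A ⊆ N.X) (v r : α)
    (htree : N.G.inDeg v = 1 ∧ N.G.outDeg v = 2)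
    (hr : N.G.IsLowestSA N.root A r) (hdesc : N.G.Reaches r v)
    (hleaves : ∀ x ∈ N.X, N.G.Reaches v x → x ∈ A)
    (H : Digraph' α) (hH : Digraph'.FullSimp (N.G.pathGraph r A) H)
    (w : α) (hw : N.G.Reaches v w) :
    w ∈ H.V :=
  descendants_mem_exhibited_general N A v r htree hr hdesc hleaves H hH w hw
end

section
/- Let N be a recoverable rooted binary phylogenetic network on X with |X| ≥ 2, and suppose N' is obtained from N by reducing a leaf of a cherry or cutting a reticulated cherry. Then N' is recoverable. -/
open scoped Classical

/-!
If `v` is a stable ancestor of the leaves of `N'`, it is one of the leaves of `N`. Indeed, a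
root-to-leaf path of `N` either avoids the vertices removed by the operation, and is then a path
of `N'`, or it first enters a suppressed parent of a picked leaf from some vertex `q`; in `N'` the
suppression created an arc from `q` to that leaf, so the prefix up to `q` followed by the leaf is a
root-to-leaf path of `N'`. It contains `v`, and `v` is not a leaf since `N'` has at least two
leaves, so `v` lies on the original path. The one exception is reducing a cherry of a network with
two leaves whose cherry parent is not the root; but then that parent is a stable ancestor of `N`.
-/

namespace Digraph'

variable {α : Type*} {G G' G'' : Digraph' α} {S T : Set α}
  {r s u v w x y : α} {P : List α}

lemma PathFrom.getLast_mem (hP : G.PathFrom r x P) : x ∈ P :=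
  List.mem_of_getLast? hP.2.2

lemma PathFrom.concat (hP : G.PathFrom r x P) (hxy : (x, y) ∈ G.E) (hy : y ∈ G.V) :
    G.PathFrom r y (P ++ [y]) := by
  obtain ⟨⟨hne, hV, hch⟩, hh, hl⟩ := hP
  refine ⟨⟨by simp, ?_, ?_⟩, by rwa [List.head?_append_of_ne_nil _ hne], by simp⟩
  · simpa [or_imp, forall_and] using ⟨hV, hy⟩
  · exact List.isChain_append.2 ⟨hch, List.isChain_singleton y, by simpa [hl] using hxy⟩

lemma PathFrom.exists_succ (hP : G.PathFrom r x P) (hu : u ∈ P) (hux : u ≠ x) :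
    ∃ w ∈ P, (u, w) ∈ G.E := by
  obtain ⟨⟨-, -, hch⟩, -, hl⟩ := hP
  obtain ⟨s, t, rfl⟩ := List.append_of_mem hu
  rcases t with _ | ⟨w, t⟩
  · exact absurd (by simpa using hl) hux
  · exact ⟨w, by simp, (List.isChain_cons_cons.1 (List.isChain_append.1 hch).2.1).1⟩

lemma PathFrom.exists_prefix (hP : G.PathFrom r x P) (hs : s ∈ P) (hsr : s ≠ r) :
    ∃ P₁ rest q, P = P₁ ++ s :: rest ∧ s ∉ P₁ ∧ G.PathFrom r q P₁ ∧ (q, s) ∈ G.E := by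
  obtain ⟨⟨-, hV, hch⟩, hh, -⟩ := hP
  obtain ⟨P₁, rest, hsP₁, rfl, -⟩ := List.exists_erase_eq hs
  have hne : P₁ ≠ [] := by
    rintro rfl
    exact hsr (by simpa using hh)
  have hlast := List.getLast?_eq_some_getLast hne
  obtain ⟨hch₁, -, hlink⟩ := List.isChain_append.1 hch
  refine ⟨P₁, rest, P₁.getLast hne, rfl, hsP₁,
    ⟨⟨hne, fun u hu => hV u (by simp [hu]), hch₁⟩, ?_, hlast⟩, hlink _ (by simp [hlast]) _ rfl⟩
  rwa [List.head?_append_of_ne_nil _ hne] at hh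

def KeepsOutside (G G' : Digraph' α) (S : Set α) : Prop :=
  (∀ u ∈ G.V, u ∉ S → u ∈ G'.V) ∧ ∀ u w, (u, w) ∈ G.E → u ∉ S → w ∉ S → (u, w) ∈ G'.E

lemma KeepsOutside.trans (h : G.KeepsOutside G' S) (h' : G'.KeepsOutside G'' T) :
    G.KeepsOutside G'' (S ∪ T) := by
  simp only [KeepsOutside, Set.mem_union, not_or] at *
  exact ⟨fun u hu huS => h'.1 u (h.1 u hu huS.1) huS.2,
    fun u w huw hu hw => h'.2 u w (h.2 u w huw hu.1 hw.1) hu.2 hw.2⟩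

lemma KeepsOutside.pathFrom (hK : G.KeepsOutside G' S) (hP : G.PathFrom r x P)
    (hPS : ∀ s ∈ S, s ∉ P) : G'.PathFrom r x P := by
  have hPS' : ∀ u ∈ P, u ∉ S := fun u hu huS => hPS u huS hu
  obtain ⟨⟨hne, hV, hch⟩, hh, hl⟩ := hP
  exact ⟨⟨hne, fun u hu => hK.1 u (hV u hu) (hPS' u hu),
    hch.imp_of_mem_imp fun u w hu hw huw => hK.2 u w huw (hPS' u hu) (hPS' w hw)⟩, hh, hl⟩

lemma KeepsOutside.exists_pathFrom_of_prefix {X : Finset α} (hK : G.KeepsOutside G' S)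
    (hP : G.PathFrom r x P) (hPS : ∀ s ∈ S, s ∉ P) (hxy : (x, y) ∈ G'.E) (hy : y ∈ G'.V)
    (hyX : y ∈ X) (L : List α) :
    ∃ y ∈ X, ∃ Q, G'.PathFrom r y Q ∧ ∀ u ∈ Q, u ∈ P ++ L ∨ u = y := by
  refine ⟨y, hyX, P ++ [y], (hK.pathFrom hP hPS).concat hxy hy, fun u hu => ?_⟩
  simp only [List.mem_append, List.mem_cons, List.not_mem_nil, or_false] at hu ⊢
  tauto

def Shadows (G G' : Digraph' α) (r : α) (X X' : Finset α) : Prop :=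
  ∀ x ∈ X, ∀ P, G.PathFrom r x P → ∃ y ∈ X', ∃ Q, G'.PathFrom r y Q ∧ ∀ u ∈ Q, u ∈ P ∨ u = y

lemma Shadows.stableAncestor {X X' : Finset α} (hS : G.Shadows G' r X X')
    (hv : G'.StableAncestor r X' v) (hvX : v ∉ X') : G.StableAncestor r X v := by
  intro x hx P hP
  obtain ⟨y, hy, Q, hQ, hQP⟩ := hS x hx P hP
  exact (hQP v (hv y hy Q hQ)).resolve_right fun h => hvX (h ▸ hy)

variable [DecidableEq α]

lemma outDeg_ne_zero (h : (u, w) ∈ G.E) : G.outDeg u ≠ 0 :=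
  (Multiset.card_pos_iff_exists_mem.2 ⟨(u, w), Multiset.mem_filter.2 ⟨h, rfl⟩⟩ :
    0 < G.outDeg u).ne'

lemma inDeg_ne_zero (h : (u, w) ∈ G.E) : G.inDeg w ≠ 0 :=
  (Multiset.card_pos_iff_exists_mem.2 ⟨(u, w), Multiset.mem_filter.2 ⟨h, rfl⟩⟩ :
    0 < G.inDeg w).ne'

lemma eq_of_inDeg_eq_one (h : G.inDeg w = 1) (hu : (u, w) ∈ G.E) (hv : (v, w) ∈ G.E) :
    u = v := by
  obtain ⟨e, he⟩ := Multiset.card_eq_one.1 h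
  have hu' : (u, w) ∈ G.E.filter (fun e => e.2 = w) := Multiset.mem_filter.2 ⟨hu, rfl⟩
  have hv' : (v, w) ∈ G.E.filter (fun e => e.2 = w) := Multiset.mem_filter.2 ⟨hv, rfl⟩
  rw [he, Multiset.mem_singleton] at hu' hv'
  exact congrArg Prod.fst (hu'.trans hv'.symm)

lemma eq_of_outDeg_eq_one_s11 (h : G.outDeg u = 1) (hv : (u, v) ∈ G.E) (hw : (u, w) ∈ G.E) :
    v = w := by
  obtain ⟨e, he⟩ := Multiset.card_eq_one.1 h
  have hv' : (u, v) ∈ G.E.filter (fun e => e.1 = u) := Multiset.mem_filter.2 ⟨hv, rfl⟩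
  have hw' : (u, w) ∈ G.E.filter (fun e => e.1 = u) := Multiset.mem_filter.2 ⟨hw, rfl⟩
  rw [he, Multiset.mem_singleton] at hv' hw'
  exact congrArg Prod.snd (hv'.trans hw'.symm)

lemma Suppress.mem_E (h : G.Suppress w G') (hu : (u, w) ∈ G.E) (hy : (w, y) ∈ G.E) :
    (u, y) ∈ G'.E := by
  obtain ⟨hin, hout, p, c, hp, hc, -, hE⟩ := h
  rw [hE, eq_of_inDeg_eq_one hin hu hp, eq_of_outDeg_eq_one_s11 hout hy hc]
  exact Multiset.mem_add.2 (Or.inr (Multiset.mem_singleton_self _))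

lemma PathFrom.not_mem_of_outDeg_eq_zero (hP : G.PathFrom r x P) (hu : G.outDeg u = 0)
    (hux : u ≠ x) : u ∉ P := fun huP =>
  let ⟨_, _, huw⟩ := hP.exists_succ huP hux
  outDeg_ne_zero huw hu

lemma PathFrom.not_mem_of_child_outDeg_eq_zero (hP : G.PathFrom r x P) (hu : G.outDeg u = 1)
    (huv : (u, v) ∈ G.E) (hv : G.outDeg v = 0) (hux : u ≠ x) (hvx : v ≠ x) : u ∉ P := by
  intro huP
  obtain ⟨w, hw, huw⟩ := hP.exists_succ huP hux
  rw [eq_of_outDeg_eq_one_s11 hu huw huv] at hw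
  exact hP.not_mem_of_outDeg_eq_zero hv hvx hw

lemma PathFrom.mem_of_inDeg_eq_one (hP : G.PathFrom r x P) (hs : s ∈ P) (hsr : s ≠ r)
    (h : G.inDeg s = 1) (hu : (u, s) ∈ G.E) : u ∈ P := by
  obtain ⟨P₁, rest, q, rfl, -, hP₁, hq⟩ := hP.exists_prefix hs hsr
  rw [eq_of_inDeg_eq_one h hu hq]
  exact List.mem_append_left _ hP₁.getLast_mem

lemma keepsOutside_deleteVertex (G : Digraph' α) (w : α) :
    G.KeepsOutside (G.deleteVertex w) {w} :=
  ⟨fun _ hu huw => Finset.mem_erase.2 ⟨huw, hu⟩,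
    fun _ _ huv hu hv => Multiset.mem_filter.2 ⟨huv, hu, hv⟩⟩

lemma Suppress.keepsOutside (h : G.Suppress w G') : G.KeepsOutside G' {w} := by
  obtain ⟨-, -, p, c, -, -, hV, hE⟩ := h
  refine ⟨fun u hu huw => hV ▸ Finset.mem_erase.2 ⟨huw, hu⟩, fun u v huv hu hv => ?_⟩
  rw [hE]
  exact Multiset.mem_add.2 (Or.inl ((G.keepsOutside_deleteVertex w).2 u v huv hu hv))

lemma keepsOutside_of_erase (hV : G'.V = G.V) (hE : G'.E = G.E.erase (u, v)) :
    G.KeepsOutside G' {u} :=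
  ⟨fun _ hx _ => hV ▸ hx, fun x y hxy hx _ =>
    hE ▸ (Multiset.mem_erase_of_ne fun h : (x, y) = (u, v) => hx (congrArg Prod.fst h)).2 hxy⟩

end Digraph'

namespace PhyloNet

open Digraph'

variable {α : Type*} {N N' : PhyloNet α} {a b p pa pb u v x : α}

lemma recoverable_of_root_mem_X (h : N.root ∈ N.X) : N.Recoverable := by
  intro v hv
  have hP : N.G.PathFrom N.root N.root [N.root] :=
    ⟨⟨by simp, by simpa using N.root_mem, List.isChain_singleton _⟩, rfl, rfl⟩
  simpa using hv _ h _ hP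

variable [DecidableEq α]

lemma binary_of_two_le_card (hX : 2 ≤ N.X.card) :
    N.G.inDeg N.root = 0 ∧ N.G.outDeg N.root = 2 ∧
    (∀ x ∈ N.X, x ∈ N.G.V ∧ N.G.inDeg x = 1 ∧ N.G.outDeg x = 0) ∧
    (∀ v ∈ N.G.V, N.G.outDeg v = 0 → v ∈ N.X) ∧
    (∀ v ∈ N.G.V, v ≠ N.root → v ∉ N.X →
      (N.G.inDeg v = 1 ∧ N.G.outDeg v = 2) ∨ (N.G.inDeg v = 2 ∧ N.G.outDeg v = 1)) := by
  convert N.binary.resolve_left ?_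
  rintro ⟨-, -, hX₁⟩
  simp [hX₁] at hX

lemma leaf_degrees (hX : 2 ≤ N.X.card) (hx : x ∈ N.X) :
    x ∈ N.G.V ∧ N.G.inDeg x = 1 ∧ N.G.outDeg x = 0 :=
  (binary_of_two_le_card hX).2.2.1 x hx

lemma ne_root_of_mem_E (hX : 2 ≤ N.X.card) (h : (u, v) ∈ N.G.E) : v ≠ N.root := by
  rintro rfl
  exact inDeg_ne_zero h (binary_of_two_le_card hX).1

lemma outDeg_eq_one_of_inDeg_eq_two (hX : 2 ≤ N.X.card) (hv : v ∈ N.G.V)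
    (h : N.G.inDeg v = 2) : N.G.outDeg v = 1 := by
  obtain ⟨hroot, -, hleaf, -, hinner⟩ := binary_of_two_le_card hX
  have hvr : v ≠ N.root := fun hvr => by simp [hvr, hroot] at h
  have hvX : v ∉ N.X := fun hvX => by simp [(hleaf v hvX).2.1] at h
  rcases hinner v hv hvr hvX with ⟨h1, -⟩ | ⟨-, h1⟩
  · omega
  · exact h1

lemma not_mem_X_of_stableAncestor (hX : 2 ≤ N.X.card)
    (hv : N.G.StableAncestor N.root N.X v) : v ∉ N.X := by
  intro hvX
  obtain ⟨w, hw, hwv⟩ := Finset.exists_mem_ne hX v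
  obtain ⟨P, hP⟩ := N.reach w (leaf_degrees hX hw).1
  exact hP.not_mem_of_outDeg_eq_zero (leaf_degrees hX hvX).2.2 hwv.symm (hv w hw P hP)

lemma recoverable_of_shadows (hrec : N.Recoverable) (hroot : N'.root = N.root)
    (hX' : 2 ≤ N'.X.card) (hS : N.G.Shadows N'.G N.root N.X N'.X) : N'.Recoverable := by
  intro v hv
  have hvX := not_mem_X_of_stableAncestor hX' hv
  rw [hroot] at hv ⊢
  exact hrec v (hS.stableAncestor hv hvX)

lemma shadows_of_reduceCherry (hX : 2 ≤ N.X.card) (ha : a ∈ N.X) (hb : b ∈ N.X) (hab : a ≠ b)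
    (hX' : N'.X = N.X.erase b) (hpa : (p, a) ∈ N.G.E) (hpb : (p, b) ∈ N.G.E)
    (hp : p ≠ N.root) (hsupp : (N.G.deleteVertex b).Suppress p N'.G) :
    N.G.Shadows N'.G N.root N.X N'.X := by
  have hb₀ := (leaf_degrees hX hb).2.2
  have hpb' : p ≠ b := by rintro rfl; exact outDeg_ne_zero hpa hb₀
  have hap : a ≠ p := by rintro rfl; exact outDeg_ne_zero hpa (leaf_degrees hX ha).2.2
  have hK₁ := N.G.keepsOutside_deleteVertex b
  have hK := hK₁.trans hsupp.keepsOutside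
  intro x hx P hP
  by_cases hpP : p ∈ P
  · obtain ⟨P₁, rest, q, rfl, hpP₁, hP₁, hqp⟩ := hP.exists_prefix hpP hp
    have hbP₁ : b ∉ P₁ := fun hbP₁ =>
      (hP₁.concat hqp (N.wf _ hpa).1).not_mem_of_outDeg_eq_zero hb₀ hpb'.symm
        (List.mem_append_left _ hbP₁)
    have hqb : q ≠ b := fun h => hbP₁ (h ▸ hP₁.getLast_mem)
    exact hK.exists_pathFrom_of_prefix hP₁ (by simp [hbP₁, hpP₁])
      (hsupp.mem_E (hK₁.2 _ _ hqp hqb hpb') (hK₁.2 _ _ hpa hpb' hab))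
      (hK.1 a (leaf_degrees hX ha).1 (by simp [hab, hap]))
      (hX' ▸ Finset.mem_erase.2 ⟨hab, ha⟩) _
  · have hbP : b ∉ P := fun hbP =>
      hpP (hP.mem_of_inDeg_eq_one hbP (ne_root_of_mem_E hX hpb) (leaf_degrees hX hb).2.1 hpb)
    have hxb : x ≠ b := fun h => hbP (h ▸ hP.getLast_mem)
    exact ⟨x, hX' ▸ Finset.mem_erase.2 ⟨hxb, hx⟩, P, hK.pathFrom hP (by simp [hbP, hpP]),
      fun u hu => Or.inl hu⟩

lemma ReduceCherry.recoverable (hX : 2 ≤ N.X.card) (hrec : N.Recoverable)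
    (h : N.ReduceCherry a b N') : N'.Recoverable := by
  obtain ⟨⟨ha, hb, hab, -⟩, hX', p, hpa, hpb, ⟨-, -, -, hroot⟩ | ⟨hp, hroot, hsupp⟩⟩ := h
  · exact recoverable_of_root_mem_X (by rw [hroot, hX']; exact Finset.mem_erase.2 ⟨hab, ha⟩)
  refine recoverable_of_shadows hrec hroot ?_
    (shadows_of_reduceCherry hX ha hb hab hX' hpa hpb hp hsupp)
  rw [hX', Finset.card_erase_of_mem hb]
  by_contra! hX₂
  have hXab : N.X = {a, b} :=
    (Finset.eq_of_subset_of_card_le (Finset.insert_subset ha (Finset.singleton_subset_iff.2 hb))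
      (by rw [Finset.card_pair hab]; omega)).symm
  -- with only the two leaves of the cherry, their parent is a non-root stable ancestor
  refine hp (hrec p fun x hx P hP => ?_)
  obtain rfl | rfl : x = a ∨ x = b := by simpa [hXab] using hx
  · exact hP.mem_of_inDeg_eq_one hP.getLast_mem (ne_root_of_mem_E hX hpa)
      (leaf_degrees hX ha).2.1 hpa
  · exact hP.mem_of_inDeg_eq_one hP.getLast_mem (ne_root_of_mem_E hX hpb)
      (leaf_degrees hX hb).2.1 hpb

lemma shadows_of_cutRetCherry (hX : 2 ≤ N.X.card) (ha : a ∈ N.X) (hb : b ∈ N.X)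
    (hpaa : (pa, a) ∈ N.G.E) (hpbb : (pb, b) ∈ N.G.E) (hpapb : (pa, pb) ∈ N.G.E)
    (hpb₂ : N.G.inDeg pb = 2) {G₁ G₂ : Digraph' α} (hV₁ : G₁.V = N.G.V)
    (hE₁ : G₁.E = N.G.E.erase (pa, pb)) (h₂ : G₁.Suppress pa G₂) (h₃ : G₂.Suppress pb N'.G) :
    N.G.Shadows N'.G N.root N.X N.X := by
  have ha₀ := (leaf_degrees hX ha).2.2
  have hb₀ := (leaf_degrees hX hb).2.2
  have hapb : a ≠ pb := by rintro rfl; exact outDeg_ne_zero hpbb ha₀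
  have hbpa : b ≠ pa := by rintro rfl; exact outDeg_ne_zero hpaa hb₀
  have hapa : a ≠ pa := by rintro rfl; exact outDeg_ne_zero hpaa ha₀
  have hbpb : b ≠ pb := by rintro rfl; exact outDeg_ne_zero hpbb hb₀
  have hpb₁ := outDeg_eq_one_of_inDeg_eq_two hX (N.wf _ hpbb).1 hpb₂
  have hpa_root : pa ≠ N.root := by
    obtain ⟨-, -, q, -, hq, -⟩ := h₂
    exact ne_root_of_mem_E hX (Multiset.mem_of_mem_erase (hE₁ ▸ hq))
  have hK₂ : N.G.KeepsOutside G₂ {pa} := by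
    simpa only [Set.union_self] using (keepsOutside_of_erase hV₁ hE₁).trans h₂.keepsOutside
  have hK := hK₂.trans h₃.keepsOutside
  intro x hx P hP
  by_cases hpaP : pa ∈ P
  · obtain ⟨P₁, rest, q, rfl, hpaP₁, hP₁, hqpa⟩ := hP.exists_prefix hpaP hpa_root
    have hpbP₁ : pb ∉ P₁ := fun hpbP₁ =>
      (hP₁.concat hqpa (N.wf _ hpaa).1).not_mem_of_child_outDeg_eq_zero hpb₁ hpbb hb₀
        (fun h => hpaP₁ (h ▸ hpbP₁)) hbpa (List.mem_append_left _ hpbP₁)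
    have hqpa' : q ≠ pa := fun h => hpaP₁ (h ▸ hP₁.getLast_mem)
    have hqpb : q ≠ pb := fun h => hpbP₁ (h ▸ hP₁.getLast_mem)
    have hqpa₁ : (q, pa) ∈ G₁.E :=
      hE₁ ▸ (Multiset.mem_erase_of_ne fun h => hqpa' (congrArg Prod.fst h)).2 hqpa
    have hpaa₁ : (pa, a) ∈ G₁.E :=
      hE₁ ▸ (Multiset.mem_erase_of_ne fun h => hapb (congrArg Prod.snd h)).2 hpaa
    exact hK.exists_pathFrom_of_prefix hP₁ (by simp [hpaP₁, hpbP₁])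
      (h₃.keepsOutside.2 _ _ (h₂.mem_E hqpa₁ hpaa₁) hqpb hapb)
      (hK.1 a (leaf_degrees hX ha).1 (by simp [hapa, hapb])) ha _
  by_cases hpbP : pb ∈ P
  · obtain ⟨P₁, rest, q, rfl, hpbP₁, hP₁, hqpb⟩ :=
      hP.exists_prefix hpbP (ne_root_of_mem_E hX hpapb)
    have hpaP₁ : pa ∉ P₁ := fun h => hpaP (List.mem_append_left _ h)
    have hqpa : q ≠ pa := fun h => hpaP₁ (h ▸ hP₁.getLast_mem)
    have hpbpa : pb ≠ pa := fun h => hpaP (h ▸ hpbP)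
    exact hK.exists_pathFrom_of_prefix hP₁ (by simp [hpaP₁, hpbP₁])
      (h₃.mem_E (hK₂.2 _ _ hqpb hqpa hpbpa) (hK₂.2 _ _ hpbb hpbpa hbpa))
      (hK.1 b (leaf_degrees hX hb).1 (by simp [hbpa, hbpb])) hb _
  · exact ⟨x, hx, P, hK.pathFrom hP (by simp [hpaP, hpbP]), fun u hu => Or.inl hu⟩

lemma CutRetCherry.recoverable (hX : 2 ≤ N.X.card) (hrec : N.Recoverable)
    (h : N.CutRetCherry a b N') : N'.Recoverable := by
  obtain ⟨ha, hb, -, hX', hroot, pa, pb, hpaa, hpbb, hpapb, hpb₂, G₁, hV₁, hE₁, G₂, h₂, h₃⟩ := h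
  exact recoverable_of_shadows hrec hroot (hX' ▸ hX)
    (hX' ▸ shadows_of_cutRetCherry hX ha hb hpaa hpbb hpapb hpb₂ hV₁ hE₁ h₂ h₃)

end PhyloNet

/-- picking a cherry or a reticulated cherry of a recoverable
network yields a recoverable network. -/
theorem recoverable_of_pickStep
    {α : Type*} [DecidableEq α] (N N' : PhyloNet α)
    (hX : 2 ≤ N.X.card) (hrec : N.Recoverable) (h : N.PickStep N') :
    N'.Recoverable := by
  rcases h with ⟨a, b, h⟩ | ⟨a, b, h⟩
  · exact h.recoverable hX hrec
  · exact h.recoverable hX hrec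
end
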